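/- Let α ∈ (−∞,2), N ∈ ℕ, and let δ ∈ (0,1) be small enough that the iterated logarithms ln₁(x),…,ln_N(x) are defined and positive on (0,δ). Define y_N(x) = x^(−1/2)·Π_{k=1}^{N} [ln_k(x)]^(−1/2) and q_{α,N}(x) = (3/4 − α/2)·x^(α−2) − (1/2)(2 − α)·x^(α−2)·Σ_{j=1}^{N} Π_{ℓ=1}^{j} [ln_ℓ(x)]^(−1) + (3/4)·x^(α−2)·Σ_{j=1}^{N} Π_{ℓ=1}^{j} [ln_ℓ(x)]^(−2) + x^(α−2)·Σ_{j=1}^{N−1} ( Π_{ℓ=1}^{j} [ln_ℓ(x)]^(−2) )·( Σ_{m=j+1}^{N} Π_{p=j+1}^{m} [ln_p(x)]^(−1) ) (sums over empty index sets are 0). Then y_N is differentiable on (0,δ), the function x ↦ x^α·y_N′(x) is differentiable on (0,δ), and −(x^α·y_N′(x))′ + q_{α,N}(x)·y_N(x) = 0 for all x ∈ (0,δ). -/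

import Mathlib

noncomputable section

open MeasureTheory Set

/-- Iterated logarithms: `iterLog 1 x = ln (1/x)`, `iterLog (j+1) x = ln (iterLog j x)`. -/
def iterLog : ℕ → ℝ → ℝ
  | 0, x => 1 / x
  | j + 1, x => Real.log (iterLog j x)

/-- `y_N(x) = x^(-1/2) ∏_{k=1}^N [ln_k(x)]^(-1/2)`. -/
def yN (N : ℕ) (x : ℝ) : ℝ :=
  x ^ (-(1 : ℝ) / 2) * ∏ k ∈ Finset.Icc 1 N, (iterLog k x) ^ (-(1 : ℝ) / 2)

/-- The potential `q_{α,N}` of (3.11). -/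
def qAlphaN (α : ℝ) (N : ℕ) (x : ℝ) : ℝ :=
  (3 / 4 - α / 2) * x ^ (α - 2)
    - (1 / 2) * (2 - α) * x ^ (α - 2) *
        ∑ j ∈ Finset.Icc 1 N, ∏ l ∈ Finset.Icc 1 j, (iterLog l x)⁻¹
    + (3 / 4) * x ^ (α - 2) *
        ∑ j ∈ Finset.Icc 1 N, ∏ l ∈ Finset.Icc 1 j, ((iterLog l x)⁻¹) ^ 2
    + x ^ (α - 2) *
        ∑ j ∈ Finset.Icc 1 (N - 1),
          (∏ l ∈ Finset.Icc 1 j, ((iterLog l x)⁻¹) ^ 2) *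
            ∑ m ∈ Finset.Icc (j + 1) N, ∏ p ∈ Finset.Icc (j + 1) m, (iterLog p x)⁻¹


def PP (j : ℕ) (x : ℝ) : ℝ := ∏ l ∈ Finset.Icc 1 j, (iterLog l x)⁻¹

lemma sumsq (f : ℕ → ℝ) (n : ℕ) :
    2 * ∑ k ∈ Finset.Icc 1 n, f k * ∑ l ∈ Finset.Icc 1 k, f l
      = (∑ k ∈ Finset.Icc 1 n, f k) ^ 2 + ∑ k ∈ Finset.Icc 1 n, f k ^ 2 := by
  induction n with
  | zero => simp
  | succ n ih =>
    rw [Finset.sum_Icc_succ_top (by omega) (fun k => f k * ∑ l ∈ Finset.Icc 1 k, f l),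
      Finset.sum_Icc_succ_top (by omega) f, Finset.sum_Icc_succ_top (by omega) (fun k => f k ^ 2)]
    linear_combination ih

lemma crosssq (f : ℕ → ℝ) (n : ℕ) :
    2 * ∑ j ∈ Finset.Icc 1 n, f j * ∑ m ∈ Finset.Icc (j + 1) n, f m
      = (∑ k ∈ Finset.Icc 1 n, f k) ^ 2 - ∑ k ∈ Finset.Icc 1 n, f k ^ 2 := by
  induction n with
  | zero => simp
  | succ n ih =>
    have h1 : ∀ j ∈ Finset.Icc 1 n, f j * ∑ m ∈ Finset.Icc (j + 1) (n + 1), f m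
        = f j * ∑ m ∈ Finset.Icc (j + 1) n, f m + f j * f (n + 1) := by
      intro j hj
      rw [Finset.sum_Icc_succ_top (by simp at hj; omega) f]; ring
    rw [Finset.sum_Icc_succ_top (by omega)
        (fun j => f j * ∑ m ∈ Finset.Icc (j + 1) (n + 1), f m),
      Finset.sum_congr rfl h1, Finset.sum_add_distrib, ← Finset.sum_mul]
    rw [show (∑ k ∈ Finset.Icc 1 (n+1), f k) = ∑ k ∈ Finset.Icc 1 n, f k + f (n+1) from
      Finset.sum_Icc_succ_top (by omega) f,
      Finset.sum_Icc_succ_top (by omega) (fun k => f k ^ 2)]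
    have he : Finset.Icc (n + 1 + 1) (n + 1) = ∅ := Finset.Icc_eq_empty (by omega)
    rw [he]
    simp only [Finset.sum_empty, zero_add]
    linear_combination ih

lemma iterLog_zero_eq : iterLog 0 = fun t : ℝ => t⁻¹ := by
  funext t; simp [iterLog, one_div]

lemma PP_succ (j : ℕ) (hj : 1 ≤ j) (x : ℝ) :
    PP j x = PP (j - 1) x * (iterLog j x)⁻¹ := by
  simp only [PP]
  conv_lhs => rw [show j = j - 1 + 1 by omega,
    Finset.prod_Icc_succ_top (by omega) (fun l => (iterLog l x)⁻¹)]
  rw [show j - 1 + 1 = j by omega]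

lemma hasDerivAt_iterLog {N : ℕ} {δ : ℝ}
    (hpos : ∀ x ∈ Ioo (0 : ℝ) δ, ∀ j ∈ Finset.Icc 1 N, 0 < iterLog j x)
    {x : ℝ} (hx : x ∈ Ioo (0 : ℝ) δ) :
    ∀ j, 1 ≤ j → j ≤ N → HasDerivAt (iterLog j) (-(x⁻¹ * PP (j - 1) x)) x := by
  have hx0 : x ≠ 0 := ne_of_gt hx.1
  intro j
  induction j with
  | zero => omega
  | succ j ih =>
    intro _ hjN
    rcases Nat.eq_zero_or_pos j with rfl | hj
    · have h0 : HasDerivAt (iterLog 0) (-(x ^ 2)⁻¹) x := by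
        rw [iterLog_zero_eq]; exact hasDerivAt_inv hx0
      have hne : iterLog 0 x ≠ 0 := by
        rw [iterLog_zero_eq]; exact inv_ne_zero hx0
      have h2 := (Real.hasDerivAt_log hne).comp x h0
      have heq : Real.log ∘ iterLog 0 = iterLog 1 := by
        funext t; simp [iterLog, Function.comp]
      rw [heq] at h2
      refine h2.congr_deriv (Eq.symm ?_)
      rw [iterLog_zero_eq]
      simp only [PP]
      rw [show Finset.Icc 1 0 = ∅ from Finset.Icc_eq_empty (by omega)]
      simp only [Finset.prod_empty, mul_one, inv_inv]
      field_simp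
    · have hD := ih hj (by omega)
      have hne : iterLog j x ≠ 0 :=
        ne_of_gt (hpos x hx j (Finset.mem_Icc.2 ⟨hj, by omega⟩))
      have h2 := (Real.hasDerivAt_log hne).comp x hD
      have heq : Real.log ∘ iterLog j = iterLog (j + 1) := by
        funext t; simp [iterLog, Function.comp]
      rw [heq] at h2
      refine h2.congr_deriv (Eq.symm ?_)
      simp only [Nat.add_sub_cancel]
      rw [PP_succ j hj]
      ring

lemma hasDerivAt_logIter {N : ℕ} {δ : ℝ}
    (hpos : ∀ x ∈ Ioo (0 : ℝ) δ, ∀ j ∈ Finset.Icc 1 N, 0 < iterLog j x)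
    {l : ℕ} (h1 : 1 ≤ l) (hlN : l ≤ N) {x : ℝ} (hx : x ∈ Ioo (0 : ℝ) δ) :
    HasDerivAt (fun t => Real.log (iterLog l t)) (-(x⁻¹ * PP l x)) x := by
  have hne : iterLog l x ≠ 0 := ne_of_gt (hpos x hx l (Finset.mem_Icc.2 ⟨h1, hlN⟩))
  have := (Real.hasDerivAt_log hne).comp x (hasDerivAt_iterLog hpos hx l h1 hlN)
  refine this.congr_deriv (Eq.symm ?_)
  rw [PP_succ l h1]
  ring

lemma PP_eq_exp {N : ℕ} {δ : ℝ}
    (hpos : ∀ x ∈ Ioo (0 : ℝ) δ, ∀ j ∈ Finset.Icc 1 N, 0 < iterLog j x)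
    {j : ℕ} (hjN : j ≤ N) {t : ℝ} (ht : t ∈ Ioo (0 : ℝ) δ) :
    PP j t = Real.exp (-∑ l ∈ Finset.Icc 1 j, Real.log (iterLog l t)) := by
  have h1 : ∀ l ∈ Finset.Icc 1 j, (iterLog l t)⁻¹ = Real.exp (-Real.log (iterLog l t)) := by
    intro l hl
    simp only [Finset.mem_Icc] at hl
    rw [Real.exp_neg, Real.exp_log (hpos t ht l (Finset.mem_Icc.2 ⟨hl.1, le_trans hl.2 hjN⟩))]
  rw [PP, Finset.prod_congr rfl h1, ← Real.exp_sum, ← Finset.sum_neg_distrib]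

lemma hasDerivAt_PP {N : ℕ} {δ : ℝ}
    (hpos : ∀ x ∈ Ioo (0 : ℝ) δ, ∀ j ∈ Finset.Icc 1 N, 0 < iterLog j x)
    {j : ℕ} (hjN : j ≤ N) {x : ℝ} (hx : x ∈ Ioo (0 : ℝ) δ) :
    HasDerivAt (PP j) (x⁻¹ * (PP j x * ∑ l ∈ Finset.Icc 1 j, PP l x)) x := by
  have hG : HasDerivAt (fun t => -∑ l ∈ Finset.Icc 1 j, Real.log (iterLog l t))
      (-∑ l ∈ Finset.Icc 1 j, -(x⁻¹ * PP l x)) x := by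
    refine HasDerivAt.neg (HasDerivAt.fun_sum fun l hl => ?_)
    simp only [Finset.mem_Icc] at hl
    exact hasDerivAt_logIter hpos hl.1 (le_trans hl.2 hjN) hx
  have hE := hG.exp
  have hev : PP j =ᶠ[nhds x] fun t =>
      Real.exp (-∑ l ∈ Finset.Icc 1 j, Real.log (iterLog l t)) := by
    filter_upwards [isOpen_Ioo.mem_nhds hx] with t ht
    exact PP_eq_exp hpos hjN ht
  have hfin := hE.congr_of_eventuallyEq hev
  refine hfin.congr_deriv (Eq.symm ?_)
  rw [← PP_eq_exp hpos hjN hx]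
  simp only [Finset.sum_neg_distrib, neg_neg, Finset.mul_sum]
  exact Finset.sum_congr rfl fun l _ => by ring

lemma yN_eq_exp {N : ℕ} {δ : ℝ}
    (hpos : ∀ x ∈ Ioo (0 : ℝ) δ, ∀ j ∈ Finset.Icc 1 N, 0 < iterLog j x)
    {t : ℝ} (ht : t ∈ Ioo (0 : ℝ) δ) :
    yN N t = Real.exp (Real.log t * (-(1 : ℝ) / 2)
      + ∑ k ∈ Finset.Icc 1 N, Real.log (iterLog k t) * (-(1 : ℝ) / 2)) := by
  have h1 : ∀ k ∈ Finset.Icc 1 N, (iterLog k t) ^ (-(1 : ℝ) / 2)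
      = Real.exp (Real.log (iterLog k t) * (-(1 : ℝ) / 2)) := fun k hk =>
    Real.rpow_def_of_pos (hpos t ht k hk) _
  rw [yN, Finset.prod_congr rfl h1, ← Real.exp_sum,
    Real.rpow_def_of_pos ht.1, ← Real.exp_add]

lemma hasDerivAt_yN {N : ℕ} {δ : ℝ}
    (hpos : ∀ x ∈ Ioo (0 : ℝ) δ, ∀ j ∈ Finset.Icc 1 N, 0 < iterLog j x)
    {x : ℝ} (hx : x ∈ Ioo (0 : ℝ) δ) :
    HasDerivAt (yN N)
      (-(1 / 2) * x⁻¹ * ((1 - ∑ k ∈ Finset.Icc 1 N, PP k x) * yN N x)) x := by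
  have hx0 : x ≠ 0 := ne_of_gt hx.1
  have hF : HasDerivAt (fun t => Real.log t * (-(1 : ℝ) / 2)
      + ∑ k ∈ Finset.Icc 1 N, Real.log (iterLog k t) * (-(1 : ℝ) / 2))
      (x⁻¹ * (-(1 : ℝ) / 2) + ∑ k ∈ Finset.Icc 1 N, -(x⁻¹ * PP k x) * (-(1 : ℝ) / 2)) x := by
    refine ((Real.hasDerivAt_log hx0).mul_const _).add (HasDerivAt.fun_sum fun k hk => ?_)
    simp only [Finset.mem_Icc] at hk
    exact (hasDerivAt_logIter hpos hk.1 hk.2 hx).mul_const _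
  have hE := hF.exp
  have hev : yN N =ᶠ[nhds x] fun t => Real.exp (Real.log t * (-(1 : ℝ) / 2)
      + ∑ k ∈ Finset.Icc 1 N, Real.log (iterLog k t) * (-(1 : ℝ) / 2)) := by
    filter_upwards [isOpen_Ioo.mem_nhds hx] with t ht
    exact yN_eq_exp hpos ht
  have hfin := hE.congr_of_eventuallyEq hev
  refine hfin.congr_deriv (Eq.symm ?_)
  rw [← yN_eq_exp hpos hx]
  have hsum : (∑ k ∈ Finset.Icc 1 N, -(x⁻¹ * PP k x) * (-(1 : ℝ) / 2))
      = 1 / 2 * x⁻¹ * ∑ k ∈ Finset.Icc 1 N, PP k x := by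
    rw [Finset.mul_sum]
    exact Finset.sum_congr rfl fun k _ => by ring
  rw [hsum]
  ring

lemma PP_mul_prod (x : ℝ) (j : ℕ) : ∀ m, j ≤ m →
    PP j x * ∏ p ∈ Finset.Icc (j + 1) m, (iterLog p x)⁻¹ = PP m x := by
  intro m hm
  induction m, hm using Nat.le_induction with
  | base => rw [Finset.Icc_eq_empty (by omega)]; simp
  | succ m hm ih =>
    rw [Finset.prod_Icc_succ_top (by omega) (fun p => (iterLog p x)⁻¹), ← mul_assoc, ih,
      PP_succ (m + 1) (by omega)]
    simp

lemma cross_eq (x : ℝ) (N : ℕ) (hN : 1 ≤ N) :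
    ∑ j ∈ Finset.Icc 1 (N - 1), (∏ l ∈ Finset.Icc 1 j, ((iterLog l x)⁻¹) ^ 2) *
        ∑ m ∈ Finset.Icc (j + 1) N, ∏ p ∈ Finset.Icc (j + 1) m, (iterLog p x)⁻¹
      = ((∑ k ∈ Finset.Icc 1 N, PP k x) ^ 2 - ∑ k ∈ Finset.Icc 1 N, PP k x ^ 2) / 2 := by
  have hterm : ∀ j ∈ Finset.Icc 1 (N - 1),
      (∏ l ∈ Finset.Icc 1 j, ((iterLog l x)⁻¹) ^ 2) *
        ∑ m ∈ Finset.Icc (j + 1) N, ∏ p ∈ Finset.Icc (j + 1) m, (iterLog p x)⁻¹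
      = PP j x * ∑ m ∈ Finset.Icc (j + 1) N, PP m x := by
    intro j hj
    have h1 : ∏ l ∈ Finset.Icc 1 j, ((iterLog l x)⁻¹) ^ 2 = PP j x ^ 2 :=
      Finset.prod_pow _ 2 _
    rw [h1, sq, mul_assoc, Finset.mul_sum]
    refine congrArg _ (Finset.sum_congr rfl fun m hm => ?_)
    simp only [Finset.mem_Icc] at hm
    exact PP_mul_prod x j m (by omega)
  rw [Finset.sum_congr rfl hterm]
  obtain ⟨M, rfl⟩ : ∃ M, N = M + 1 := ⟨N - 1, by omega⟩
  simp only [Nat.add_sub_cancel]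
  have hext : ∑ j ∈ Finset.Icc 1 M, PP j x * ∑ m ∈ Finset.Icc (j + 1) (M + 1), PP m x
      = ∑ j ∈ Finset.Icc 1 (M + 1), PP j x * ∑ m ∈ Finset.Icc (j + 1) (M + 1), PP m x := by
    rw [Finset.sum_Icc_succ_top (by omega)
      (fun j => PP j x * ∑ m ∈ Finset.Icc (j + 1) (M + 1), PP m x),
      show Finset.Icc (M + 1 + 1) (M + 1) = ∅ from Finset.Icc_eq_empty (by omega)]
    simp
  rw [hext]
  have := crosssq (fun k => PP k x) (M + 1)
  linarith

theorem statement7 (α : ℝ) (hα : α < 2) (N : ℕ) (hN : 1 ≤ N)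
    (δ : ℝ) (hδ : δ ∈ Ioo (0 : ℝ) 1)
    (hpos : ∀ x ∈ Ioo (0 : ℝ) δ, ∀ j ∈ Finset.Icc 1 N, 0 < iterLog j x) :
    ∃ g h : ℝ → ℝ,
      (∀ x ∈ Ioo (0 : ℝ) δ, HasDerivAt (yN N) (g x) x) ∧
      (∀ x ∈ Ioo (0 : ℝ) δ, HasDerivAt (fun t : ℝ => t ^ α * g t) (h x) x) ∧
      (∀ x ∈ Ioo (0 : ℝ) δ, -h x + qAlphaN α N x * yN N x = 0) := by
  refine ⟨fun t => -(1 / 2) * t⁻¹ * ((1 - ∑ k ∈ Finset.Icc 1 N, PP k t) * yN N t),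
    fun t => α * t ^ (α - 1) * (-(1 / 2) * t⁻¹ * ((1 - ∑ k ∈ Finset.Icc 1 N, PP k t) * yN N t))
      + t ^ α * (-(1 / 2) * -(t ^ 2)⁻¹ * ((1 - ∑ k ∈ Finset.Icc 1 N, PP k t) * yN N t)
        + -(1 / 2) * t⁻¹ *
          (-(t⁻¹ * ∑ k ∈ Finset.Icc 1 N, PP k t * ∑ l ∈ Finset.Icc 1 k, PP l t) * yN N t
            + (1 - ∑ k ∈ Finset.Icc 1 N, PP k t) *
              (-(1 / 2) * t⁻¹ * ((1 - ∑ k ∈ Finset.Icc 1 N, PP k t) * yN N t)))),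
    ?_, ?_, ?_⟩
  · intro x hx
    exact hasDerivAt_yN hpos hx
  · intro x hx
    have hx0 : x ≠ 0 := ne_of_gt hx.1
    have hA : HasDerivAt (fun t : ℝ => t ^ α) (α * x ^ (α - 1)) x :=
      Real.hasDerivAt_rpow_const (Or.inl hx0)
    have hB : HasDerivAt (fun t : ℝ => -(1 / 2 : ℝ) * t⁻¹) (-(1 / 2 : ℝ) * -(x ^ 2)⁻¹) x :=
      (hasDerivAt_inv hx0).const_mul _
    have hSsum : HasDerivAt (fun t => ∑ k ∈ Finset.Icc 1 N, PP k t)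
        (x⁻¹ * ∑ k ∈ Finset.Icc 1 N, PP k x * ∑ l ∈ Finset.Icc 1 k, PP l x) x := by
      have h : HasDerivAt (fun t => ∑ k ∈ Finset.Icc 1 N, PP k t)
          (∑ k ∈ Finset.Icc 1 N, x⁻¹ * (PP k x * ∑ l ∈ Finset.Icc 1 k, PP l x)) x :=
        HasDerivAt.fun_sum fun k hk => hasDerivAt_PP hpos (Finset.mem_Icc.1 hk).2 hx
      rw [Finset.mul_sum]
      exact h
    have hC : HasDerivAt (fun t => 1 - ∑ k ∈ Finset.Icc 1 N, PP k t)
        (-(x⁻¹ * ∑ k ∈ Finset.Icc 1 N, PP k x * ∑ l ∈ Finset.Icc 1 k, PP l x)) x :=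
      hSsum.const_sub 1
    have hy := hasDerivAt_yN hpos hx
    exact hA.mul (hB.mul (hC.mul hy))
  · intro x hx
    have hxpos : (0 : ℝ) < x := hx.1
    have hx0 : x ≠ 0 := ne_of_gt hxpos
    have hsum := sumsq (fun k => PP k x) N
    have hcr := cross_eq x N hN
    have e1 : x ^ (α - 1) = x ^ (α - 2) * x := by
      have h := Real.rpow_add hxpos (α - 2) 1
      rw [Real.rpow_one, show α - 2 + 1 = α - 1 by ring] at h
      exact h
    have e2 : x ^ α = x ^ (α - 2) * x * x := by
      have h := Real.rpow_add hxpos (α - 2) 2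
      rw [show α - 2 + 2 = α by ring, show (2 : ℝ) = ((2 : ℕ) : ℝ) by norm_num,
        Real.rpow_natCast] at h
      rw [h]
      ring_nf
    have hpw : ∀ j : ℕ, ∏ l ∈ Finset.Icc 1 j, ((iterLog l x)⁻¹) ^ 2 = PP j x ^ 2 :=
      fun j => Finset.prod_pow _ 2 _
    have hfold : (∑ j ∈ Finset.Icc 1 N, ∏ l ∈ Finset.Icc 1 j, (iterLog l x)⁻¹)
        = ∑ j ∈ Finset.Icc 1 N, PP j x := rfl
    have hT : (∑ k ∈ Finset.Icc 1 N, PP k x * ∑ l ∈ Finset.Icc 1 k, PP l x)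
        = ((∑ k ∈ Finset.Icc 1 N, PP k x) ^ 2 + ∑ k ∈ Finset.Icc 1 N, PP k x ^ 2) / 2 := by
      linarith
    beta_reduce
    unfold qAlphaN
    rw [hcr, hfold, hT, e1, e2]
    simp only [hpw]
    set s := ∑ k ∈ Finset.Icc 1 N, PP k x
    set qq := ∑ k ∈ Finset.Icc 1 N, PP k x ^ 2
    field_simp
    ring
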